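/- arXiv:2207.05516 — 2 statements merged into one kernel-verified Lean document; each statement's English description precedes it below -/
import Mathlib

section
/- In the basic model, the mean Age-of-Information over one period is sandwiched as follows: (B' + N' − n − a·b)/2 ≤ (1/(aBN))·Σ_{k=1}^{aBN} α_k ≤ (B' + N' − n + a·b)/2. -/
/-!
Write `k = i + 1 + j·(N a)` with `i < N a` and `j < B`. The first summand `k A' % N'` depends only
on `i`, and since `A b` is coprime to `N a` it runs through the multiples of `n` below `N'` exactly
once. For fixed `i` the second summand is `(x + j·(a b)·(A N n)) % ((a b)·B)` with `A N n` coprime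
to `B`, so it equals `x % (a b)` plus `a b` times a complete residue system mod `B`. Altogether
`2 Σ α_k = aBN·(B' + N' − n − a b) + 2B·T` with `0 ≤ T ≤ (N a)·(a b)`.
-/

/-- The Age-of-Information sequence of the basic model:
`α_k = (k·A' % N') + ((k·A' % B' − k·A' % N') % B')`. -/
def aoiBasic (A' B' N' : ℤ) (k : ℕ) : ℤ :=
  ((k : ℤ) * A') % N' + (((k : ℤ) * A') % B' - ((k : ℤ) * A') % N') % B'

open Finset

theorem Int.emod_mul_of_nonneg {c : ℤ} (hc : 0 ≤ c) (x B : ℤ) :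
    x % (c * B) = x % c + c * (x / c % B) := by
  rw [Int.emod_def x (c * B), Int.emod_def x c, Int.emod_def (x / c) B,
    ← Int.ediv_ediv_of_nonneg hc]
  ring

theorem two_mul_sum_range_intCast (m : ℕ) : 2 * ∑ j ∈ range m, (j : ℤ) = m * (m - 1) := by
  induction m with
  | zero => simp
  | succ m ih => rw [sum_range_succ, mul_add, ih]; push_cast; ring

theorem sum_Icc_one_mul_eq_sum_sum {M : Type*} [AddCommMonoid M] (f : ℕ → M) (d B : ℕ) :
    ∑ k ∈ Icc 1 (d * B), f k = ∑ i ∈ range d, ∑ j ∈ range B, f (i + 1 + j * d) := by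
  rw [← Ico_add_one_right_eq_Icc, sum_Ico_eq_sum_range, Nat.add_sub_cancel, sum_comm]
  induction B with
  | zero => simp
  | succ B ih =>
    rw [Nat.mul_succ, sum_range_add, ih, sum_range_succ]
    refine congrArg _ (sum_congr rfl fun i _ => ?_)
    ring_nf

theorem sum_range_zmod_natCast {M : Type*} [AddCommMonoid M] (m : ℕ) [NeZero m]
    (f : ZMod m → M) : ∑ j ∈ range m, f j = ∑ z : ZMod m, f z := by
  refine sum_nbij' (↑) ZMod.val (fun _ _ => mem_univ _) (fun z _ => mem_range.2 z.val_lt)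
    (fun j hj => ZMod.val_natCast_of_lt (mem_range.1 hj)) (fun z _ => ZMod.natCast_zmod_val z)
    (fun _ _ => rfl)

theorem sum_range_add_mul_emod_of_coprime (u : ℤ) {e m : ℕ} (hm : 0 < m) (h : e.Coprime m) :
    ∑ j ∈ range m, (u + j * e) % m = ∑ j ∈ range m, (j : ℤ) := by
  have : NeZero m := ⟨hm.ne'⟩
  have hval (x : ℤ) : x % m = ((x : ZMod m).val : ℤ) := (ZMod.val_intCast x).symm
  let g : ZMod m → ℤ := fun z => z.val
  have hshift : Function.Bijective fun z : ZMod m => u + z * e :=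
    ((add_right_injective _).comp
      (ZMod.unitOfCoprime e h).isUnit.mul_left_injective).bijective_of_finite
  calc ∑ j ∈ range m, (u + j * e) % m = ∑ j ∈ range m, g (u + (j : ZMod m) * e) := by
        refine sum_congr rfl fun j _ => ?_
        rw [hval]; push_cast; rfl
    _ = ∑ z : ZMod m, g z := by
        rw [sum_range_zmod_natCast m fun z => g (u + z * e)]
        exact hshift.sum_comp g
    _ = ∑ j ∈ range m, (j : ℤ) := by
        rw [← sum_range_zmod_natCast]
        exact sum_congr rfl fun j hj => by simp only [g, ZMod.val_natCast_of_lt (mem_range.1 hj)]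

theorem sum_range_add_mul_mul_emod_mul (x : ℤ) {c e B : ℕ} (hc : 0 < c) (hB : 0 < B)
    (h : e.Coprime B) :
    ∑ j ∈ range B, (x + j * (c * e)) % (c * B) = B * (x % c) + c * ∑ j ∈ range B, (j : ℤ) := by
  have hc' : (c : ℤ) ≠ 0 := by exact_mod_cast hc.ne'
  have hterm (j : ℕ) :
      (x + j * (c * e)) % (c * B) = x % c + c * ((x / c + j * e) % B) := by
    have hj : x + j * (c * e) = x + c * (j * e) := by ring
    rw [Int.emod_mul_of_nonneg (by positivity), hj, Int.add_mul_emod_self_left,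
      Int.add_mul_ediv_left _ _ hc']
  rw [sum_congr rfl fun j _ => hterm j, sum_add_distrib, ← mul_sum,
    sum_range_add_mul_emod_of_coprime _ hB h, sum_const, card_range, nsmul_eq_mul]

theorem Nat.coprime_of_eq_gcd_mul_right {x y n : ℕ} (hn : 0 < n) (h : n = gcd (x * n) (y * n)) :
    x.Coprime y := by
  rw [Nat.gcd_mul_right, eq_comm, Nat.mul_eq_right hn.ne'] at h
  exact h

theorem aoiBasic_eq (A' B' N' : ℤ) (k : ℕ) :
    aoiBasic A' B' N' k = k * A' % N' + (k * A' - k * A' % N') % B' := by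
  rw [aoiBasic, Int.emod_sub_emod]

theorem sum_range_succ_mul_emod_of_coprime {u d n : ℕ} (hd : 0 < d) (hn : 0 < n)
    (h : u.Coprime d) :
    ∑ i ∈ range d, ((i : ℤ) + 1) * (u * n) % (d * n) = n * ∑ i ∈ range d, (i : ℤ) := by
  have hterm (i : ℕ) : ((i : ℤ) + 1) * (u * n) % (d * n) = n * ((u + i * u) % d) := by
    rw [← Int.mul_emod_mul_of_pos _ _ (by positivity : (0 : ℤ) < n)]
    ring_nf
  rw [sum_congr rfl fun i _ => hterm i, ← mul_sum, sum_range_add_mul_emod_of_coprime _ hd h]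

theorem sum_range_aoiBasic_add_mul (A' N' : ℤ) {c e B d : ℕ} (hc : 0 < c) (hB : 0 < B)
    (h : e.Coprime B) (hN' : N' ∣ d * A') (hdA : d * A' = c * e) (k : ℕ) :
    ∑ j ∈ range B, aoiBasic A' (c * B) N' (k + j * d) =
      B * (k * A' % N') + B * ((k * A' - k * A' % N') % c) + c * ∑ j ∈ range B, (j : ℤ) := by
  obtain ⟨q, hq⟩ := hN'
  have hterm (j : ℕ) : aoiBasic A' (c * B) N' (k + j * d) =
      k * A' % N' + ((k * A' - k * A' % N') + j * (c * e)) % (c * B) := by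
    have hk : ((k + j * d : ℕ) : ℤ) * A' = k * A' + N' * (j * q) := by
      push_cast; linear_combination j * hq
    rw [aoiBasic_eq, hk, Int.add_mul_emod_self_left]
    congr 2
    linear_combination (j : ℤ) * (hdA - hq)
  rw [sum_congr rfl fun j _ => hterm j, sum_add_distrib, sum_range_add_mul_mul_emod_mul _ hc hB h,
    sum_const, card_range, nsmul_eq_mul]
  ring

theorem exists_two_mul_sum_aoiBasic_eq {A B N a b n : ℕ} (hB : 0 < B) (hN : 0 < N) (ha : 0 < a)
    (hb : 0 < b) (hn : 0 < n) (hAN : (A * b).Coprime (N * a)) (hAB : (A * N * n).Coprime B) :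
    ∃ T : ℤ, 0 ≤ T ∧ T ≤ N * a * (a * b) ∧
      2 * ∑ k ∈ Icc 1 (a * B * N), aoiBasic (A * b * n : ℤ) (B * a * b : ℤ) (N * a * n : ℤ) k =
        (a * B * N : ℤ) * (B * a * b + N * a * n - n - a * b) + 2 * B * T := by
  have hc : 0 < a * b := by positivity
  have hblock (i : ℕ) := sum_range_aoiBasic_add_mul (A * b * n : ℤ) (N * a * n : ℤ) (d := N * a)
    hc hB hAB ⟨A * b, by push_cast; ring⟩ (by push_cast; ring) (i + 1)
  have hres := sum_range_succ_mul_emod_of_coprime (by positivity) hn hAN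
  push_cast at hblock hres
  set T := ∑ i ∈ range (N * a),
    (((i : ℤ) + 1) * (A * b * n) - ((i : ℤ) + 1) * (A * b * n) % (N * a * n)) % (a * b)
  refine ⟨T, sum_nonneg fun i _ => Int.emod_nonneg _ (by positivity), ?_, ?_⟩
  · calc T ≤ ∑ _i ∈ range (N * a), ((a * b : ℕ) : ℤ) :=
          sum_le_sum fun i _ => (Int.emod_lt_of_pos _ (by positivity)).le
      _ = N * a * (a * b) := by simp
  · rw [show a * B * N = N * a * B by ring, sum_Icc_one_mul_eq_sum_sum,
      show (B * a * b : ℤ) = a * b * B by ring]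
    simp only [hblock]
    rw [sum_add_distrib, sum_add_distrib, ← mul_sum, ← mul_sum, hres, sum_const, card_range,
      nsmul_eq_mul]
    have hGB := two_mul_sum_range_intCast B
    have hGd := two_mul_sum_range_intCast (N * a)
    push_cast at hGd ⊢
    linear_combination (B : ℤ) * n * hGd + (N * a * (a * b) : ℤ) * hGB

theorem stmt7_general (A B N a b n : ℕ) (hB : 0 < B) (hN : 0 < N)
    (hapos : 0 < a) (hbpos : 0 < b) (hnpos : 0 < n)
    (ha : a = Nat.gcd (B * a * b) (N * a * n))
    (hb : b = Nat.gcd (A * b * n) (B * a * b))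
    (hn : n = Nat.gcd (A * b * n) (N * a * n)) :
    ((B : ℚ) * a * b + (N : ℚ) * a * n - n - (a : ℚ) * b) / 2 ≤
        (1 / ((a : ℚ) * B * N)) *
          ∑ k ∈ Finset.Icc 1 (a * B * N),
            ((aoiBasic (A * b * n : ℤ) (B * a * b : ℤ) (N * a * n : ℤ) k : ℤ) : ℚ) ∧
      (1 / ((a : ℚ) * B * N)) *
          ∑ k ∈ Finset.Icc 1 (a * B * N),
            ((aoiBasic (A * b * n : ℤ) (B * a * b : ℤ) (N * a * n : ℤ) k : ℤ) : ℚ) ≤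
        ((B : ℚ) * a * b + (N : ℚ) * a * n - n + (a : ℚ) * b) / 2 := by
  rw [mul_right_comm A b n] at hb
  rw [mul_right_comm B a b, mul_right_comm N a n] at ha
  have hAN : (A * b).Coprime (N * a) := Nat.coprime_of_eq_gcd_mul_right hnpos hn
  have hAnBa : (A * n).Coprime (B * a) := Nat.coprime_of_eq_gcd_mul_right hbpos hb
  have hBN : (B * b).Coprime (N * n) := Nat.coprime_of_eq_gcd_mul_right hapos ha
  have hAB : (A * N * n).Coprime B := by
    have hAB : A.Coprime B := (hAnBa.coprime_dvd_left (dvd_mul_right A n)).coprime_dvd_right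
      (dvd_mul_right B a)
    have hNB : N.Coprime B := (hBN.symm.coprime_dvd_left (dvd_mul_right N n)).coprime_dvd_right
      (dvd_mul_right B b)
    have hnB : n.Coprime B := (hAnBa.coprime_dvd_left (dvd_mul_left n A)).coprime_dvd_right
      (dvd_mul_right B a)
    exact (hAB.mul_left hNB).mul_left hnB
  obtain ⟨T, hT0, hTle, hS⟩ := exists_two_mul_sum_aoiBasic_eq hB hN hapos hbpos hnpos hAN hAB
  have hM : (0 : ℚ) < a * B * N := by positivity
  qify at hS hT0 hTle
  have hBT0 : (0 : ℚ) ≤ B * T := by positivity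
  have hBTle : (B : ℚ) * T ≤ B * (N * a * (a * b)) := by gcongr
  rw [one_div_mul_eq_div]
  constructor
  · rw [le_div_iff₀ hM]; linarith
  · rw [div_le_iff₀ hM]; linarith

/-- Corollary 1, eq. (12): in the basic model the mean AoI over one period is
sandwiched between `(B' + N' − n − a·b)/2` and `(B' + N' − n + a·b)/2`. -/
theorem stmt7 (A B N a b n : ℕ) (hA : 0 < A) (hB : 0 < B) (hN : 0 < N)
    (hapos : 0 < a) (hbpos : 0 < b) (hnpos : 0 < n)
    (ha : a = Nat.gcd (B * a * b) (N * a * n))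
    (hb : b = Nat.gcd (A * b * n) (B * a * b))
    (hn : n = Nat.gcd (A * b * n) (N * a * n)) :
    ((B : ℚ) * a * b + (N : ℚ) * a * n - n - (a : ℚ) * b) / 2 ≤
        (1 / ((a : ℚ) * B * N)) *
          ∑ k ∈ Finset.Icc 1 (a * B * N),
            ((aoiBasic (A * b * n : ℤ) (B * a * b : ℤ) (N * a * n : ℤ) k : ℤ) : ℚ) ∧
      (1 / ((a : ℚ) * B * N)) *
          ∑ k ∈ Finset.Icc 1 (a * B * N),
            ((aoiBasic (A * b * n : ℤ) (B * a * b : ℤ) (N * a * n : ℤ) k : ℤ) : ℚ) ≤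
        ((B : ℚ) * a * b + (N : ℚ) * a * n - n + (a : ℚ) * b) / 2 :=
  stmt7_general A B N a b n hB hN hapos hbpos hnpos ha hb hn
end

section
/- In the extended model, for every fixed l ≥ 0, over a·B·N consecutive steps the sequence (α^{[l]}_k) generates the following distribution of values: the multiset { α^{[l]}_k : k = 1, …, aBN } equals the multiset union over i = 0, …, a−1 and j = 0, …, N−1 of the arithmetic progressions { c^{[l]}_{ij} + m·a·b : m = 0, 1, …, B−1 }. -/
/-- The `l`-failure Age-of-Information sequence of the extended model. -/
def aoiExt (A' B' N' ΔB ΔN : ℤ) (l k : ℕ) : ℤ :=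
  2 + (l : ℤ) * N' + ((k : ℤ) * A' - ΔN - 1) % N' +
    (((k : ℤ) * A' - ΔB - 2 - (l : ℤ) * N') % B' -
      ((k : ℤ) * A' - ΔN - 1) % N') % B'

/-- The starting points `c^{[l]}_{ij}` of Theorem 2. -/
def cExt (A' N' a b n : ℕ) (ΔB ΔN : ℕ) (l : ℕ) (i j : ℕ) : ℤ :=
  2 + (l : ℤ) * N' +
    ((i : ℤ) * A' - ΔB - 2 - (l : ℤ) * N') % ((a : ℤ) * b) +
    ((a : ℤ) * b) *
      ⌈(((((i : ℤ) * A' - ΔN - 1) % ((a : ℤ) * n)) -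
          (((i : ℤ) * A' - ΔB - 2 - (l : ℤ) * N') % ((a : ℤ) * b)) +
          (j : ℤ) * a * n : ℤ) : ℚ) / ((a : ℚ) * b)⌉

/-!
Write `x_N(k) = kA' - Δ_N - 1`, `x_B(k) = kA' - Δ_B - 2 - lN'` and `R = x_N(k) % N'`. Then
`α_k - 2 - lN'` is the least integer `≥ R` congruent to `x_B(k)` modulo `B' = B·ab`, and
`c_{ij} - 2 - lN'`, for `i = k % a` and `j = ⌊R / an⌋`, is the least one congruent to it modulo
`ab` (as `an` and `ab` divide `aA'`, only `k % a` matters there). Hence `α_k = c_{ij} + m·ab` with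
`0 ≤ m < B`. Equal triples `(i, j, m)` for `k, k'` force `N' ∣ (k' - k)A'` and `B' ∣ (k' - k)A'`;
the gcd conditions say that `a, b, n` are all the common factors of `A', B', N'`, so `aBN ∣ k' - k`.
Thus `k ↦ (i, j, m)` is a bijection from `a·B·N` consecutive steps onto `[0,a) × [0,N) × [0,B)`.
-/

theorem Int.eq_add_emod_sub_of_modEq {M R X z : ℤ} (hz : z ≡ X [ZMOD M]) (h₁ : R ≤ z)
    (h₂ : z < R + M) : z = R + (X - R) % M := by
  rw [← (hz.sub_right R).eq, Int.emod_eq_of_lt (by linarith) (by linarith)]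
  ring

theorem Int.emod_add_mul_ceil_div (R X : ℤ) {y : ℤ} (hy : 0 < y) :
    X % y + y * ⌈((R - X % y : ℤ) : ℚ) / y⌉ = R + (X - R) % y := by
  set c := ⌈((R - X % y : ℤ) : ℚ) / y⌉
  have hyq : (0 : ℚ) < y := by exact_mod_cast hy
  have hc₁ : R - X % y ≤ y * c := by
    have := Int.le_ceil (((R - X % y : ℤ) : ℚ) / y)
    rw [div_le_iff₀ hyq] at this
    exact_mod_cast (by linarith : ((R - X % y : ℤ) : ℚ) ≤ y * c)
  have hc₂ : y * c < R - X % y + y := by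
    have := Int.ceil_lt_add_one (((R - X % y : ℤ) : ℚ) / y)
    rw [← sub_lt_iff_lt_add, lt_div_iff₀ hyq] at this
    exact_mod_cast (by linarith : (y : ℚ) * c < ((R - X % y : ℤ) : ℚ) + y)
  apply Int.eq_add_emod_sub_of_modEq _ (by linarith) (by linarith)
  calc X % y + y * c ≡ X % y + 0 [ZMOD y] :=
        (Int.modEq_zero_iff_dvd.2 (dvd_mul_right y c)).add_left _
    _ = X % y := add_zero _
    _ ≡ X [ZMOD y] := Int.mod_modEq X y

theorem Int.natCast_mul_modEq_mod_mul (k a : ℕ) (c m : ℤ) :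
    (k : ℤ) * (c * m) ≡ ((k % a : ℕ) : ℤ) * (c * m) [ZMOD a * m] := by
  refine (Int.modEq_iff_dvd.2 ⟨(k / a : ℕ) * c, ?_⟩).symm
  have : ((k % a : ℕ) : ℤ) + a * (k / a : ℕ) = k := by exact_mod_cast Nat.mod_add_div k a
  linear_combination (-(c * m)) * this

theorem Nat.coprime_of_eq_gcd_mul_right_s11 {c x y : ℕ} (hc : 0 < c)
    (h : c = Nat.gcd (x * c) (y * c)) : Nat.Coprime x y := by
  rw [Nat.gcd_mul_right] at h
  exact (Nat.mul_eq_right hc.ne').1 h.symm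

theorem Finset.map_val_comp_of_injOn {α β γ : Type*} {s : Finset α} {t : Finset β} {f : α → β}
    (g : β → γ) (hf : Set.InjOn f s) (hst : ∀ x ∈ s, f x ∈ t) (hcard : t.card ≤ s.card) :
    s.val.map (g ∘ f) = t.val.map g := by
  classical
  have himage : s.image f = t :=
    Finset.eq_of_subset_of_card_le (fun y hy => by
      obtain ⟨x, hx, rfl⟩ := Finset.mem_image.1 hy
      exact hst x hx) (by rw [Finset.card_image_of_injOn hf]; exact hcard)
  rw [← Multiset.map_map, ← Finset.image_val_of_injOn hf, himage]

theorem Finset.product_val_map {α β γ : Type*} (s : Finset α) (t : Finset β) (g : α × β → γ) :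
    (s ×ˢ t).val.map g = s.val.bind fun p => t.val.map fun m => g (p, m) := by
  rw [Finset.product_val]
  simp [SProd.sprod, Multiset.product, Multiset.map_bind]

theorem Int.mul_mul_dvd_of_dvd_mul_mul {A B N a b n : ℕ} {d : ℤ}
    (ha : 0 < a) (hb : 0 < b) (hn : 0 < n)
    (hAbNa : Nat.Coprime (A * b) (N * a)) (hAnBa : Nat.Coprime (A * n) (B * a))
    (hBN : Nat.Coprime B N) (hN : (N * a * n : ℤ) ∣ d * (A * b * n))
    (hB : (B * a * b : ℤ) ∣ d * (A * b * n)) : (a * B * N : ℤ) ∣ d := by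
  have hNa : (N * a : ℤ) ∣ d := by
    have hcop : IsCoprime (N * a : ℤ) (A * b) := by exact_mod_cast hAbNa.symm.isCoprime
    refine hcop.dvd_of_dvd_mul_right
      ((mul_dvd_mul_iff_right (c := (n : ℤ)) (by positivity)).1 ?_)
    rw [show d * (A * b) * n = d * (A * b * n) by ring]
    exact hN
  have hBa : (B * a : ℤ) ∣ d := by
    have hcop : IsCoprime (B * a : ℤ) (A * n) := by exact_mod_cast hAnBa.symm.isCoprime
    refine hcop.dvd_of_dvd_mul_right
      ((mul_dvd_mul_iff_right (c := (b : ℤ)) (by positivity)).1 ?_)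
    rw [show d * (A * n) * b = d * (A * b * n) by ring]
    exact hB
  obtain ⟨u, rfl⟩ := hNa
  have hBu : (B : ℤ) ∣ N * u := by
    obtain ⟨w, hw⟩ := hBa
    exact ⟨w, mul_left_cancel₀ (show (a : ℤ) ≠ 0 by positivity) (by linear_combination hw)⟩
  obtain ⟨v, rfl⟩ := (Nat.isCoprime_iff_coprime.2 hBN).dvd_of_dvd_mul_left hBu
  exact ⟨v, by ring⟩

namespace ExtendedModel

variable (A B N a b n ΔB ΔN l : ℕ)

def xN (k : ℕ) : ℤ := k * ((A : ℤ) * b * n) - ΔN - 1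

def xB (k : ℕ) : ℤ := k * ((A : ℤ) * b * n) - ΔB - 2 - l * ((N : ℤ) * a * n)

def rN (k : ℕ) : ℤ := xN A b n ΔN k % (N * a * n)

/-- `k ↦ ((i, j), m)` with `α_k = c_{ij} + m·ab`. -/
def index (k : ℕ) : (ℕ × ℕ) × ℕ :=
  ((k % a, (rN A N a b n ΔN k / (a * n)).toNat),
    ((xB A N a b n ΔB l k - rN A N a b n ΔN k) % (B * a * b) / (a * b)).toNat)

variable {A B N a b n ΔB ΔN l}

theorem aoiExt_eq (k : ℕ) :
    aoiExt (A * b * n : ℤ) (B * a * b : ℤ) (N * a * n : ℤ) ΔB ΔN l k =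
      2 + l * (N * a * n) + rN A N a b n ΔN k +
        (xB A N a b n ΔB l k - rN A N a b n ΔN k) % (B * a * b) := by
  rw [aoiExt, Int.emod_sub_emod]
  rfl

theorem xN_mod_modEq (k : ℕ) : xN A b n ΔN (k % a) ≡ xN A b n ΔN k [ZMOD a * n] :=
  ((Int.natCast_mul_modEq_mod_mul k a (A * b) n).symm.sub_right _).sub_right _

theorem xB_mod_modEq (k : ℕ) :
    xB A N a b n ΔB l (k % a) ≡ xB A N a b n ΔB l k [ZMOD a * b] := by
  have h := Int.natCast_mul_modEq_mod_mul k a (A * n) b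
  rw [mul_right_comm (A : ℤ) n b] at h
  exact ((h.symm.sub_right _).sub_right _).sub_right _

theorem rN_eq (hN : 0 < N) (ha : 0 < a) (hn : 0 < n) (k : ℕ) :
    rN A N a b n ΔN k =
      xN A b n ΔN (k % a) % (a * n) + (a * n) * (index A B N a b n ΔB ΔN l k).1.2 := by
  have hj : ((index A B N a b n ΔB ΔN l k).1.2 : ℤ) = rN A N a b n ΔN k / (a * n) :=
    Int.toNat_of_nonneg (Int.ediv_nonneg (Int.emod_nonneg _ (by positivity)) (by positivity))
  rw [hj, (xN_mod_modEq k).eq, rN,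
    ← Int.emod_emod_of_dvd _ (⟨N, by ring⟩ : (a * n : ℤ) ∣ N * a * n), Int.emod_add_mul_ediv]

theorem sub_rN_emod_eq (hB : 0 < B) (ha : 0 < a) (hb : 0 < b) (k : ℕ) :
    (xB A N a b n ΔB l k - rN A N a b n ΔN k) % (B * a * b) =
      (xB A N a b n ΔB l (k % a) - rN A N a b n ΔN k) % (a * b) +
        (a * b) * (index A B N a b n ΔB ΔN l k).2 := by
  have hm : ((index A B N a b n ΔB ΔN l k).2 : ℤ) =
      (xB A N a b n ΔB l k - rN A N a b n ΔN k) % (B * a * b) / (a * b) :=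
    Int.toNat_of_nonneg (Int.ediv_nonneg (Int.emod_nonneg _ (by positivity)) (by positivity))
  rw [hm, ((xB_mod_modEq k).sub_right _).eq,
    ← Int.emod_emod_of_dvd _ (⟨B, by ring⟩ : (a * b : ℤ) ∣ B * a * b), Int.emod_add_mul_ediv]

theorem cExt_eq (hN : 0 < N) (ha : 0 < a) (hb : 0 < b) (hn : 0 < n) (k : ℕ) :
    cExt (A * b * n) (N * a * n) a b n ΔB ΔN l (k % a) (index A B N a b n ΔB ΔN l k).1.2 =
      2 + l * (N * a * n) + rN A N a b n ΔN k +
        (xB A N a b n ΔB l (k % a) - rN A N a b n ΔN k) % (a * b) := by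
  have hsum : xN A b n ΔN (k % a) % (a * n) - xB A N a b n ΔB l (k % a) % (a * b) +
        (index A B N a b n ΔB ΔN l k).1.2 * a * n =
      rN A N a b n ΔN k - xB A N a b n ΔB l (k % a) % (a * b) := by
    rw [rN_eq hN ha hn]; ring
  simp only [cExt, Nat.cast_mul]
  change 2 + _ + xB A N a b n ΔB l (k % a) % ((a : ℤ) * b) + ((a : ℤ) * b) *
    ⌈((xN A b n ΔN (k % a) % ((a : ℤ) * n) - xB A N a b n ΔB l (k % a) % ((a : ℤ) * b) +
      ((index A B N a b n ΔB ΔN l k).1.2 : ℤ) * a * n : ℤ) : ℚ) / ((a : ℚ) * b)⌉ = _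
  rw [hsum, show ((a : ℚ) * b) = ((a * b : ℤ) : ℚ) by push_cast; ring]
  linear_combination Int.emod_add_mul_ceil_div (rN A N a b n ΔN k) (xB A N a b n ΔB l (k % a))
    (y := a * b) (by positivity)

theorem aoiExt_eq_cExt_add (hB : 0 < B) (hN : 0 < N) (ha : 0 < a) (hb : 0 < b) (hn : 0 < n)
    (k : ℕ) :
    aoiExt (A * b * n : ℤ) (B * a * b : ℤ) (N * a * n : ℤ) ΔB ΔN l k =
      cExt (A * b * n) (N * a * n) a b n ΔB ΔN l (index A B N a b n ΔB ΔN l k).1.1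
          (index A B N a b n ΔB ΔN l k).1.2 + (index A B N a b n ΔB ΔN l k).2 * (a * b) := by
  rw [aoiExt_eq, sub_rN_emod_eq hB ha hb,
    show (index A B N a b n ΔB ΔN l k).1.1 = k % a from rfl, cExt_eq hN ha hb hn]
  ring

theorem index_mem (hB : 0 < B) (hN : 0 < N) (ha : 0 < a) (hb : 0 < b) (hn : 0 < n) (k : ℕ) :
    index A B N a b n ΔB ΔN l k ∈ (Finset.range a ×ˢ Finset.range N) ×ˢ Finset.range B := by
  simp only [index, Finset.mem_product, Finset.mem_range]
  refine ⟨⟨Nat.mod_lt k ha, ?_⟩, ?_⟩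
  · rw [Int.toNat_lt' hN, Int.ediv_lt_iff_lt_mul (by positivity), rN]
    exact (Int.emod_lt_of_pos _ (by positivity)).trans_eq (by ring)
  · rw [Int.toNat_lt' hB, Int.ediv_lt_iff_lt_mul (by positivity)]
    exact (Int.emod_lt_of_pos _ (by positivity)).trans_eq (by ring)

theorem index_injOn (hB : 0 < B) (hN : 0 < N) (ha : 0 < a) (hb : 0 < b) (hn : 0 < n)
    (hAbNa : Nat.Coprime (A * b) (N * a)) (hAnBa : Nat.Coprime (A * n) (B * a))
    (hBN : Nat.Coprime B N) :
    Set.InjOn (index A B N a b n ΔB ΔN l) (Finset.Icc 1 (a * B * N)) := by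
  intro k hk k' hk' h
  simp only [Finset.coe_Icc, Set.mem_Icc] at hk hk'
  have hi : k % a = k' % a := congrArg (·.1.1) h
  have hr : rN A N a b n ΔN k = rN A N a b n ΔN k' := by
    rw [rN_eq hN ha hn, rN_eq hN ha hn k', hi, h]
  have hs : (xB A N a b n ΔB l k - rN A N a b n ΔN k) % (B * a * b) =
      (xB A N a b n ΔB l k' - rN A N a b n ΔN k') % (B * a * b) := by
    rw [sub_rN_emod_eq hB ha hb, sub_rN_emod_eq hB ha hb k', hi, hr, h]
  have hdvdN : (N * a * n : ℤ) ∣ (k' - k) * (A * b * n) := by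
    have hmod : xN A b n ΔN k ≡ xN A b n ΔN k' [ZMOD N * a * n] := hr
    rw [show (k' - k : ℤ) * (A * b * n) = xN A b n ΔN k' - xN A b n ΔN k by
      simp only [xN]; ring]
    exact hmod.dvd
  have hdvdB : (B * a * b : ℤ) ∣ (k' - k) * (A * b * n) := by
    have hmod : xB A N a b n ΔB l k - rN A N a b n ΔN k ≡
        xB A N a b n ΔB l k' - rN A N a b n ΔN k' [ZMOD B * a * b] := hs
    rw [show (k' - k : ℤ) * (A * b * n) = xB A N a b n ΔB l k' - rN A N a b n ΔN k' -
        (xB A N a b n ΔB l k - rN A N a b n ΔN k) by rw [hr]; simp only [xB]; ring]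
    exact hmod.dvd
  have hdvd := Int.mul_mul_dvd_of_dvd_mul_mul ha hb hn hAbNa hAnBa hBN hdvdN hdvdB
  have hlt : |(k' : ℤ) - k| < a * B * N := by
    have hk₂ : (k : ℤ) ≤ a * B * N := by exact_mod_cast hk.2
    have hk₂' : (k' : ℤ) ≤ a * B * N := by exact_mod_cast hk'.2
    rw [abs_sub_lt_iff]; constructor <;> omega
  have := Int.eq_zero_of_abs_lt_dvd hdvd hlt
  omega

end ExtendedModel

open ExtendedModel in
theorem stmt11_general (A B N a b n : ℕ) (hB : 0 < B) (hN : 0 < N)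
    (hapos : 0 < a) (hbpos : 0 < b) (hnpos : 0 < n)
    (ha : a = Nat.gcd (B * a * b) (N * a * n))
    (hb : b = Nat.gcd (A * b * n) (B * a * b))
    (hn : n = Nat.gcd (A * b * n) (N * a * n))
    (ΔB ΔN : ℕ) (l : ℕ) :
    (Finset.Icc 1 (a * B * N)).val.map
        (fun k =>
          aoiExt (A * b * n : ℤ) (B * a * b : ℤ) (N * a * n : ℤ) (ΔB : ℤ) (ΔN : ℤ) l k) =
      ((Finset.range a ×ˢ Finset.range N).val.bind
        (fun p => (Multiset.range B).map
          (fun m =>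
            cExt (A * b * n) (N * a * n) a b n ΔB ΔN l p.1 p.2 +
              (m : ℤ) * ((a : ℤ) * b)))) := by
  have hAbNa : Nat.Coprime (A * b) (N * a) := Nat.coprime_of_eq_gcd_mul_right_s11 hnpos hn
  have hAnBa : Nat.Coprime (A * n) (B * a) :=
    Nat.coprime_of_eq_gcd_mul_right_s11 hbpos (by rwa [mul_right_comm A n b])
  have hBbNn : Nat.Coprime (B * b) (N * n) :=
    Nat.coprime_of_eq_gcd_mul_right_s11 hapos (by rwa [mul_right_comm B b a, mul_right_comm N n a])
  have hBN : Nat.Coprime B N := hBbNn.coprime_mul_right.coprime_mul_right_right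
  let G : (ℕ × ℕ) × ℕ → ℤ := fun t =>
    cExt (A * b * n) (N * a * n) a b n ΔB ΔN l t.1.1 t.1.2 + (t.2 : ℤ) * (a * b)
  calc _ = (Finset.Icc 1 (a * B * N)).val.map (G ∘ index A B N a b n ΔB ΔN l) :=
        Multiset.map_congr rfl fun k _ => aoiExt_eq_cExt_add hB hN hapos hbpos hnpos k
    _ = ((Finset.range a ×ˢ Finset.range N) ×ˢ Finset.range B).val.map G :=
        Finset.map_val_comp_of_injOn G (index_injOn hB hN hapos hbpos hnpos hAbNa hAnBa hBN)
          (fun k _ => index_mem hB hN hapos hbpos hnpos k)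
          (by simp only [Finset.card_product, Finset.card_range, Nat.card_Icc, Nat.add_sub_cancel]
              exact le_of_eq (by ring))
    _ = _ := by
        rw [Finset.product_val_map]
        congr! 2 with p
        -- the statement coerces `Multiset.range B` to `Multiset ℤ` before mapping
        rw [show ((Multiset.range B : Multiset ℕ) : Multiset ℤ) = (Multiset.range B).map (↑) from
          Multiset.bind_singleton _ _, Multiset.map_map]
        rfl

/-- Theorem 2 (distribution part): in the extended model, for every fixed `l`,
over `a·B·N` consecutive steps the sequence `α^{[l]}` generates the multiset
union over `i = 0,…,a−1` and `j = 0,…,N−1` of the arithmetic progressions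
`{c^{[l]}_{ij} + m·a·b : m = 0,…,B−1}`. -/
theorem stmt11 (A B N a b n : ℕ) (hA : 0 < A) (hB : 0 < B) (hN : 0 < N)
    (hapos : 0 < a) (hbpos : 0 < b) (hnpos : 0 < n)
    (ha : a = Nat.gcd (B * a * b) (N * a * n))
    (hb : b = Nat.gcd (A * b * n) (B * a * b))
    (hn : n = Nat.gcd (A * b * n) (N * a * n))
    (ΔB ΔN : ℕ) (l : ℕ) :
    (Finset.Icc 1 (a * B * N)).val.map
        (fun k =>
          aoiExt (A * b * n : ℤ) (B * a * b : ℤ) (N * a * n : ℤ) (ΔB : ℤ) (ΔN : ℤ) l k) =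
      ((Finset.range a ×ˢ Finset.range N).val.bind
        (fun p => (Multiset.range B).map
          (fun m =>
            cExt (A * b * n) (N * a * n) a b n ΔB ΔN l p.1 p.2 +
              (m : ℤ) * ((a : ℤ) * b)))) :=
  stmt11_general A B N a b n hB hN hapos hbpos hnpos ha hb hn ΔB ΔN l
end
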